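/- arXiv:1012.5452 — 2 statements merged into one kernel-verified Lean document; each statement's English description precedes it below -/
import Mathlib

section
/- Let (u, ρ) be a smooth solution of the periodic two-component μ-Hunter-Saxton system on [0,∞). Then for all t ≥ 0 and all x ∈ ℝ, |u(t,x)| ≤ |μ₀| + (√3/6) μ₁. -/
/-!
Both the mean `∫₀¹ u` and the energy `∫₀¹ (uₓ² + ρ²)` are conserved: after integrating the
equations over a period (using `uₜₓₓ = ∂ₓ uₜₓ` and, for the energy, the first equation to
eliminate `uₜₓₓ`), every remaining term is the `x`-derivative of a periodic function.
The bound then follows from the inequality `|f x - ∫₀¹ f| ≤ (√3 / 6) ‖f'‖₂` for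
`1`-periodic `f`: after translating `x` to `0`, integration by parts gives
`f 0 - ∫₀¹ f = ∫₀¹ (y - 1/2) f' y dy`, and `∫₀¹ (y - 1/2)² = 1/12`.
-/

open MeasureTheory Real Set Function
open scoped ContDiff

namespace Function.Periodic

protected theorem deriv {𝕜 E : Type*} [NontriviallyNormedField 𝕜] [NormedAddCommGroup E]
    [NormedSpace 𝕜 E] {f : 𝕜 → E} {c : 𝕜} (hf : Periodic f c) : Periodic (deriv f) c :=
  fun x => by rw [← deriv_comp_add_const, funext hf]

theorem intervalIntegral_eq_zero_of_hasDerivAt {E : Type*} [NormedAddCommGroup E]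
    [NormedSpace ℝ E] [CompleteSpace E] {G g : ℝ → E} {T : ℝ} (hG : Periodic G T)
    (hd : ∀ x, HasDerivAt G (g x) x) (hg : Continuous g) :
    ∫ x in (0 : ℝ)..T, g x = 0 := by
  rw [intervalIntegral.integral_eq_sub_of_hasDerivAt (fun x _ => hd x)
    (hg.intervalIntegrable _ _), hG.eq, sub_self]

end Function.Periodic

theorem ContDiff.hasDerivAt_deriv_infty {f : ℝ → ℝ} (hf : ContDiff ℝ ∞ f) (x : ℝ) :
    HasDerivAt f (deriv f x) x :=
  (hf.differentiable (by simp) x).hasDerivAt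

theorem sq_intervalIntegral_mul_le {a b : ℝ} (hab : a ≤ b) {g h : ℝ → ℝ} (hg : Continuous g)
    (hh : Continuous h) :
    (∫ x in a..b, g x * h x) ^ 2 ≤ (∫ x in a..b, g x ^ 2) * ∫ x in a..b, h x ^ 2 := by
  have hint {f : ℝ → ℝ} (hf : Continuous f) : IntervalIntegrable f volume a b :=
    hf.intervalIntegrable a b
  have hquad (l : ℝ) : 0 ≤ (∫ x in a..b, g x ^ 2) * (l * l)
      + 2 * (∫ x in a..b, g x * h x) * l + ∫ x in a..b, h x ^ 2 := by
    have hexp : ∫ x in a..b, (l * g x + h x) ^ 2 = (∫ x in a..b, g x ^ 2) * (l * l)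
        + 2 * (∫ x in a..b, g x * h x) * l + ∫ x in a..b, h x ^ 2 := by
      rw [intervalIntegral.integral_congr (g := fun x => (l * l) * g x ^ 2
          + (2 * l) * (g x * h x) + h x ^ 2) fun x _ => by ring,
        intervalIntegral.integral_add (hint (by fun_prop)) (hint (by fun_prop)),
        intervalIntegral.integral_add (hint (by fun_prop)) (hint (by fun_prop)),
        intervalIntegral.integral_const_mul, intervalIntegral.integral_const_mul]
      ring
    exact hexp ▸ intervalIntegral.integral_nonneg hab fun x _ => sq_nonneg _
  have := discrim_le_zero hquad
  rw [discrim] at this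
  nlinarith

theorem intervalIntegral_sub_half_mul_deriv {g : ℝ → ℝ} (hg : ContDiff ℝ 1 g) (hg₁ : g 1 = g 0) :
    ∫ y in (0 : ℝ)..1, (y - 1 / 2) * deriv g y = g 0 - ∫ y in (0 : ℝ)..1, g y := by
  rw [intervalIntegral.integral_mul_deriv_eq_deriv_mul (u' := fun _ => 1)
    (fun y _ => (hasDerivAt_id' y).sub_const (1 / 2))
    (fun y _ => (hg.differentiable one_ne_zero y).hasDerivAt)
    (continuous_const.intervalIntegrable _ _)
    ((hg.continuous_deriv le_rfl).intervalIntegrable _ _), hg₁]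
  simp only [one_mul]
  ring

theorem sq_sub_intervalIntegral_le {g : ℝ → ℝ} (hg : ContDiff ℝ 1 g) (hg₁ : g 1 = g 0) :
    (g 0 - ∫ y in (0 : ℝ)..1, g y) ^ 2 ≤ (∫ y in (0 : ℝ)..1, deriv g y ^ 2) / 12 := by
  have hkernel : ∫ y in (0 : ℝ)..1, (y - 1 / 2) ^ 2 = 1 / 12 := by
    norm_num [intervalIntegral.integral_comp_sub_right (fun y : ℝ => y ^ 2)]
  have := sq_intervalIntegral_mul_le zero_le_one (by fun_prop : Continuous fun y : ℝ => y - 1 / 2)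
    (hg.continuous_deriv le_rfl)
  rw [intervalIntegral_sub_half_mul_deriv hg hg₁, hkernel] at this
  linarith

theorem Function.Periodic.abs_sub_intervalIntegral_le {f : ℝ → ℝ} (hf : ContDiff ℝ 1 f)
    (hper : Periodic f 1) (x : ℝ) :
    |f x - ∫ y in (0 : ℝ)..1, f y| ≤ √3 / 6 * √(∫ y in (0 : ℝ)..1, deriv f y ^ 2) := by
  have hper₂ : Periodic (fun y => deriv f y ^ 2) 1 := hper.deriv.comp (· ^ 2)
  have hshift := sq_sub_intervalIntegral_le (g := fun y => f (y + x))
    (hf.comp (contDiff_id.add contDiff_const)) (by simp [add_comm 1 x, hper x])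
  simp only [deriv_comp_add_const, zero_add] at hshift
  rw [intervalIntegral.integral_comp_add_right (fun y => f y),
    intervalIntegral.integral_comp_add_right (fun y => deriv f y ^ 2), zero_add, add_comm 1 x,
    hper.intervalIntegral_add_eq x 0, hper₂.intervalIntegral_add_eq x 0, zero_add] at hshift
  calc |f x - ∫ y in (0 : ℝ)..1, f y| ≤ √((∫ y in (0 : ℝ)..1, deriv f y ^ 2) / 12) :=
        abs_le_sqrt hshift
    _ = √3 / 6 * √(∫ y in (0 : ℝ)..1, deriv f y ^ 2) := by
        rw [← sqrt_sq (by positivity : 0 ≤ √3 / 6), ← sqrt_mul (sq_nonneg _), div_pow,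
          sq_sqrt (by norm_num)]
        congr 1
        ring

section Fluxes

variable (c γ : ℝ) (f g r : ℝ → ℝ)

-- The right-hand side of the first equation at a fixed time, with `c` standing for `∫₀¹ u`.
noncomputable def muHSRhs (x : ℝ) : ℝ :=
  2 * c * deriv f x - 2 * deriv f x * deriv (deriv f) x - f x * deriv (deriv (deriv f)) x
    + r x * deriv r x - γ * deriv (deriv (deriv f)) x

noncomputable def momentumFlux (x : ℝ) : ℝ :=
  2 * c * f x - f x * deriv (deriv f) x - deriv f x ^ 2 / 2 + r x ^ 2 / 2
    - γ * deriv (deriv f) x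

-- Here `g` stands for `uₜ`, and `2 f g'` absorbs the term `2 f' g'` of `∂ₜ (uₓ²)`.
noncomputable def energyFlux (x : ℝ) : ℝ :=
  2 * f x * deriv g x + 2 * c * f x ^ 2 - 2 * f x ^ 2 * deriv (deriv f) x + 2 * f x * r x ^ 2
    - 2 * γ * f x * deriv (deriv f) x + γ * deriv f x ^ 2 + γ * r x ^ 2

variable {f g r}

theorem hasDerivAt_momentumFlux (hf : ContDiff ℝ ∞ f) (hr : ContDiff ℝ ∞ r) (x : ℝ) :
    HasDerivAt (momentumFlux c γ f r) (muHSRhs c γ f r x) x := by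
  have hf₁ : ContDiff ℝ ∞ (deriv f) := hf.deriv'
  have hf₂ : ContDiff ℝ ∞ (deriv (deriv f)) := hf₁.deriv'
  have d₀ := hf.hasDerivAt_deriv_infty x
  have d₁ := hf₁.hasDerivAt_deriv_infty x
  have d₂ := hf₂.hasDerivAt_deriv_infty x
  have dr := hr.hasDerivAt_deriv_infty x
  have H := ((((d₀.const_mul (2 * c)).sub (d₀.mul d₂)).sub ((d₁.pow 2).div_const 2)).add
    ((dr.pow 2).div_const 2)).sub (d₂.const_mul γ)
  refine (H.congr_deriv ?_).congr_of_eventuallyEq (.of_forall fun y => ?_)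
  · simp only [muHSRhs]
    push_cast
    ring
  · simp only [momentumFlux, Pi.add_apply, Pi.sub_apply, Pi.mul_apply, Pi.pow_apply]

theorem continuous_muHSRhs (hf : ContDiff ℝ ∞ f) (hr : ContDiff ℝ ∞ r) :
    Continuous (muHSRhs c γ f r) := by
  have hf₁ : ContDiff ℝ ∞ (deriv f) := hf.deriv'
  have hf₂ : ContDiff ℝ ∞ (deriv (deriv f)) := hf₁.deriv'
  have hf₃ : Continuous (deriv (deriv (deriv f))) := hf₂.continuous_deriv (by simp)
  have hr₁ : Continuous (deriv r) := hr.continuous_deriv (by simp)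
  have hf₀ := hf.continuous
  have hf₁c := hf₁.continuous
  have hf₂c := hf₂.continuous
  have hr₀ := hr.continuous
  unfold muHSRhs
  fun_prop

theorem intervalIntegral_muHSRhs_eq_zero (hf : ContDiff ℝ ∞ f) (hr : ContDiff ℝ ∞ r)
    (hfp : Periodic f 1) (hrp : Periodic r 1) :
    ∫ x in (0 : ℝ)..1, muHSRhs c γ f r x = 0 := by
  refine Periodic.intervalIntegral_eq_zero_of_hasDerivAt (fun x => ?_)
    (hasDerivAt_momentumFlux c γ hf hr) (continuous_muHSRhs c γ hf hr)
  simp only [momentumFlux, hfp x, hfp.deriv x, hfp.deriv.deriv x, hrp x]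

theorem hasDerivAt_energyFlux (hf : ContDiff ℝ ∞ f) (hg : ContDiff ℝ ∞ g) (hr : ContDiff ℝ ∞ r)
    (hg₂ : ∀ x, deriv (deriv g) x = -muHSRhs c γ f r x) (x : ℝ) :
    HasDerivAt (energyFlux c γ f g r)
      (2 * deriv f x * deriv g x + 2 * r x * (deriv (fun y => r y * f y) x + γ * deriv r x)) x := by
  have hf₁ : ContDiff ℝ ∞ (deriv f) := hf.deriv'
  have hf₂ : ContDiff ℝ ∞ (deriv (deriv f)) := hf₁.deriv'
  have hg₁ : ContDiff ℝ ∞ (deriv g) := hg.deriv'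
  have d₀ := hf.hasDerivAt_deriv_infty x
  have d₁ := hf₁.hasDerivAt_deriv_infty x
  have d₂ := hf₂.hasDerivAt_deriv_infty x
  have e₁ := hg₁.hasDerivAt_deriv_infty x
  have dr := hr.hasDerivAt_deriv_infty x
  have H := (((((((d₀.mul e₁).const_mul 2).add ((d₀.pow 2).const_mul (2 * c))).sub
    (((d₀.pow 2).mul d₂).const_mul 2)).add ((d₀.mul (dr.pow 2)).const_mul 2)).sub
    ((d₀.mul d₂).const_mul (2 * γ))).add ((d₁.pow 2).const_mul γ)).add
    ((dr.pow 2).const_mul γ)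
  refine (H.congr_deriv ?_).congr_of_eventuallyEq (.of_forall fun y => ?_)
  · have hrf : deriv (fun y => r y * f y) x = deriv r x * f x + r x * deriv f x :=
      (dr.mul d₀).deriv
    rw [hrf, hg₂, muHSRhs]
    push_cast [Pi.pow_apply]
    ring
  · simp only [energyFlux, Pi.add_apply, Pi.sub_apply, Pi.mul_apply, Pi.pow_apply]
    ring

theorem intervalIntegral_energyRate_eq_zero (hf : ContDiff ℝ ∞ f) (hg : ContDiff ℝ ∞ g)
    (hr : ContDiff ℝ ∞ r) (hfp : Periodic f 1) (hgp : Periodic g 1) (hrp : Periodic r 1)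
    (hg₂ : ∀ x, deriv (deriv g) x = -muHSRhs c γ f r x) :
    ∫ x in (0 : ℝ)..1,
      2 * deriv f x * deriv g x + 2 * r x * (deriv (fun y => r y * f y) x + γ * deriv r x) = 0 := by
  have hf₁ : ContDiff ℝ ∞ (deriv f) := hf.deriv'
  have hg₁ : Continuous (deriv g) := hg.continuous_deriv (by simp)
  have hr₁ : Continuous (deriv r) := hr.continuous_deriv (by simp)
  have hrf : Continuous (deriv (fun y => r y * f y)) := (hr.mul hf).continuous_deriv (by simp)
  have hf₀ := hf.continuous
  have hf₁c := hf₁.continuous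
  have hr₀ := hr.continuous
  refine Periodic.intervalIntegral_eq_zero_of_hasDerivAt (fun x => ?_)
    (hasDerivAt_energyFlux c γ hf hg hr hg₂) (by fun_prop)
  simp only [energyFlux, hfp x, hfp.deriv x, hfp.deriv.deriv x, hgp.deriv x, hrp x]

end Fluxes

section TwoVariables

variable {E : Type*} [NormedAddCommGroup E] [NormedSpace ℝ E] {Φ : ℝ × ℝ → E} {t x : ℝ}

theorem DifferentiableAt.hasDerivAt_comp_mk_left (h : DifferentiableAt ℝ Φ (t, x)) :
    HasDerivAt (fun s => Φ (s, x)) (fderiv ℝ Φ (t, x) (1, 0)) t :=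
  h.hasFDerivAt.comp_hasDerivAt t ((hasDerivAt_id t).prodMk (hasDerivAt_const t x))

theorem DifferentiableAt.hasDerivAt_comp_mk_right (h : DifferentiableAt ℝ Φ (t, x)) :
    HasDerivAt (fun y => Φ (t, y)) (fderiv ℝ Φ (t, x) (0, 1)) x :=
  h.hasFDerivAt.comp_hasDerivAt x ((hasDerivAt_const x t).prodMk (hasDerivAt_id x))

end TwoVariables

noncomputable def timeDeriv (F : ℝ → ℝ → ℝ) (t x : ℝ) : ℝ := deriv (fun s => F s x) t

theorem periodic_timeDeriv {F : ℝ → ℝ → ℝ} {c : ℝ} (h : ∀ t, Periodic (F t) c)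
    (t : ℝ) : Periodic (timeDeriv F t) c :=
  fun x => by simp only [timeDeriv, h _ x]

section SmoothFamily

variable {F : ℝ → ℝ → ℝ} (hF : ContDiff ℝ ∞ (uncurry F))
include hF

theorem contDiff_apply_of_uncurry (t : ℝ) : ContDiff ℝ ∞ (F t) :=
  hF.comp (contDiff_const.prodMk contDiff_id)

theorem hasDerivAt_timeDeriv (t x : ℝ) : HasDerivAt (fun s => F s x) (timeDeriv F t x) t :=
  ((hF.comp (contDiff_id.prodMk contDiff_const)).differentiable (by simp) t).hasDerivAt

theorem timeDeriv_eq_fderiv_uncurry (t x : ℝ) :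
    timeDeriv F t x = fderiv ℝ (uncurry F) (t, x) (1, 0) :=
  ((hF.differentiable (by simp) (t, x)).hasDerivAt_comp_mk_left).deriv

theorem deriv_eq_fderiv_uncurry (t x : ℝ) :
    deriv (F t) x = fderiv ℝ (uncurry F) (t, x) (0, 1) :=
  ((hF.differentiable (by simp) (t, x)).hasDerivAt_comp_mk_right).deriv

theorem contDiff_uncurry_timeDeriv : ContDiff ℝ ∞ (uncurry (timeDeriv F)) := by
  have : uncurry (timeDeriv F) = fun p => fderiv ℝ (uncurry F) p (1, 0) :=
    funext fun p => timeDeriv_eq_fderiv_uncurry hF p.1 p.2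
  exact this ▸ (hF.fderiv_right (by simp)).clm_apply contDiff_const

theorem contDiff_uncurry_deriv : ContDiff ℝ ∞ (uncurry fun t => deriv (F t)) := by
  have : (uncurry fun t => deriv (F t)) = fun p => fderiv ℝ (uncurry F) p (0, 1) :=
    funext fun p => deriv_eq_fderiv_uncurry hF p.1 p.2
  exact this ▸ (hF.fderiv_right (by simp)).clm_apply contDiff_const

theorem timeDeriv_deriv (t x : ℝ) :
    timeDeriv (fun s => deriv (F s)) t x = deriv (timeDeriv F t) x := by
  have hF' : ContDiff ℝ ∞ (fderiv ℝ (uncurry F)) := hF.fderiv_right (by simp)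
  have hd := hF'.differentiable (by simp) (t, x)
  have hsymm := (hF.contDiffAt (x := (t, x))).isSymmSndFDerivAt
    (by simp; exact WithTop.coe_le_coe.2 le_top)
  have h₁ : HasDerivAt (fun s => fderiv ℝ (uncurry F) (s, x) (0, 1))
      (fderiv ℝ (fderiv ℝ (uncurry F)) (t, x) (1, 0) (0, 1)) t := by
    simpa using hd.hasDerivAt_comp_mk_left.clm_apply (hasDerivAt_const t ((0 : ℝ), (1 : ℝ)))
  have h₂ : HasDerivAt (fun y => fderiv ℝ (uncurry F) (t, y) (1, 0))
      (fderiv ℝ (fderiv ℝ (uncurry F)) (t, x) (0, 1) (1, 0)) x := by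
    simpa using hd.hasDerivAt_comp_mk_right.clm_apply (hasDerivAt_const x ((1 : ℝ), (0 : ℝ)))
  simp only [timeDeriv, deriv_eq_fderiv_uncurry hF]
  rw [funext (timeDeriv_eq_fderiv_uncurry hF t), h₁.deriv, h₂.deriv, hsymm]

theorem timeDeriv_deriv_deriv (t x : ℝ) :
    timeDeriv (fun s => deriv (deriv (F s))) t x = deriv (deriv (timeDeriv F t)) x := by
  rw [timeDeriv_deriv (contDiff_uncurry_deriv hF), funext (timeDeriv_deriv hF t)]

theorem hasDerivAt_intervalIntegral (a b t : ℝ) :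
    HasDerivAt (fun s => ∫ y in a..b, F s y) (∫ y in a..b, timeDeriv F t y) t := by
  obtain ⟨C, hC⟩ : ∃ C, ∀ p ∈ Icc (t - 1) (t + 1) ×ˢ uIcc a b, ‖uncurry (timeDeriv F) p‖ ≤ C :=
    (isCompact_Icc.prod isCompact_uIcc).exists_bound_of_continuousOn
      (contDiff_uncurry_timeDeriv hF).continuous.continuousOn
  refine (intervalIntegral.hasDerivAt_integral_of_dominated_loc_of_deriv_le
    (bound := fun _ => C) (Metric.ball_mem_nhds t one_pos)
    (.of_forall fun s => (contDiff_apply_of_uncurry hF s).continuous.aestronglyMeasurable)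
    ((contDiff_apply_of_uncurry hF t).continuous.intervalIntegrable a b)
    (contDiff_apply_of_uncurry (contDiff_uncurry_timeDeriv hF) t).continuous.aestronglyMeasurable
    (.of_forall fun y hy s hs => hC (s, y) ⟨?_, uIoc_subset_uIcc hy⟩) intervalIntegrable_const
    (.of_forall fun y _ s _ => hasDerivAt_timeDeriv hF s y)).2
  rw [Metric.mem_ball, Real.dist_eq, abs_lt] at hs
  constructor <;> linarith

end SmoothFamily

theorem eq_of_deriv_eq_zero_of_le {g : ℝ → ℝ} (hg : Differentiable ℝ g) {a t : ℝ}
    (h : ∀ s, a ≤ s → deriv g s = 0) (hat : a ≤ t) : g t = g a :=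
  constant_of_has_deriv_right_zero hg.continuous.continuousOn
    (fun s hs => h s hs.1 ▸ (hg s).hasDerivAt.hasDerivWithinAt) t ⟨hat, le_rfl⟩

structure IsMuHSSolution (γ : ℝ) (u ρ : ℝ → ℝ → ℝ) : Prop where
  contDiff_u : ContDiff ℝ ∞ (uncurry u)
  contDiff_ρ : ContDiff ℝ ∞ (uncurry ρ)
  periodic_u : ∀ t, Periodic (u t) 1
  periodic_ρ : ∀ t, Periodic (ρ t) 1
  eq_u : ∀ t x, 0 ≤ t →
    deriv (fun s => ∫ y in (0 : ℝ)..1, u s y) t - timeDeriv (fun s => deriv (deriv (u s))) t x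
      = muHSRhs (∫ y in (0 : ℝ)..1, u t y) γ (u t) (ρ t) x
  eq_ρ : ∀ t x, 0 ≤ t → timeDeriv ρ t x = deriv (fun y => ρ t y * u t y) x + γ * deriv (ρ t) x

namespace IsMuHSSolution

variable {γ : ℝ} {u ρ : ℝ → ℝ → ℝ} (h : IsMuHSSolution γ u ρ)
include h

theorem contDiff_u_apply (t : ℝ) : ContDiff ℝ ∞ (u t) :=
  contDiff_apply_of_uncurry h.contDiff_u t

theorem contDiff_ρ_apply (t : ℝ) : ContDiff ℝ ∞ (ρ t) :=
  contDiff_apply_of_uncurry h.contDiff_ρ t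

theorem contDiff_timeDeriv (t : ℝ) : ContDiff ℝ ∞ (timeDeriv u t) :=
  contDiff_apply_of_uncurry (contDiff_uncurry_timeDeriv h.contDiff_u) t

theorem deriv_deriv_timeDeriv {t : ℝ} (ht : 0 ≤ t) (x : ℝ) :
    deriv (deriv (timeDeriv u t)) x = deriv (fun s => ∫ y in (0 : ℝ)..1, u s y) t
      - muHSRhs (∫ y in (0 : ℝ)..1, u t y) γ (u t) (ρ t) x := by
  rw [← timeDeriv_deriv_deriv h.contDiff_u, ← h.eq_u t x ht]
  ring

theorem deriv_mean_eq_zero {t : ℝ} (ht : 0 ≤ t) :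
    deriv (fun s => ∫ y in (0 : ℝ)..1, u s y) t = 0 := by
  have hw₁ : ContDiff ℝ ∞ (deriv (timeDeriv u t)) := (h.contDiff_timeDeriv t).deriv'
  have hw₂ : Continuous (deriv (deriv (timeDeriv u t))) := hw₁.continuous_deriv (by simp)
  have hR := continuous_muHSRhs (∫ y in (0 : ℝ)..1, u t y) γ
    (h.contDiff_u_apply t) (h.contDiff_ρ_apply t)
  have hwint : ∫ x in (0 : ℝ)..1, deriv (deriv (timeDeriv u t)) x = 0 :=
    (periodic_timeDeriv h.periodic_u t).deriv.intervalIntegral_eq_zero_of_hasDerivAt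
      hw₁.hasDerivAt_deriv_infty hw₂
  have hRint := intervalIntegral_muHSRhs_eq_zero (∫ y in (0 : ℝ)..1, u t y) γ
    (h.contDiff_u_apply t) (h.contDiff_ρ_apply t)
    (h.periodic_u t) (h.periodic_ρ t)
  have hsum : ∫ x in (0 : ℝ)..1, (deriv (deriv (timeDeriv u t)) x
      + muHSRhs (∫ y in (0 : ℝ)..1, u t y) γ (u t) (ρ t) x) = 0 := by
    rw [intervalIntegral.integral_add (hw₂.intervalIntegrable _ _) (hR.intervalIntegrable _ _),
      hwint, hRint, add_zero]
  simpa [h.deriv_deriv_timeDeriv ht] using hsum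

theorem mean_eq {t : ℝ} (ht : 0 ≤ t) :
    ∫ y in (0 : ℝ)..1, u t y = ∫ y in (0 : ℝ)..1, u 0 y :=
  eq_of_deriv_eq_zero_of_le
    (fun s => (hasDerivAt_intervalIntegral h.contDiff_u 0 1 s).differentiableAt)
    (fun _ hs => h.deriv_mean_eq_zero hs) ht

theorem contDiff_energyDensity :
    ContDiff ℝ ∞ (uncurry fun s y => deriv (u s) y ^ 2 + ρ s y ^ 2) :=
  ((contDiff_uncurry_deriv h.contDiff_u).pow 2).add (h.contDiff_ρ.pow 2)

theorem deriv_energy_eq_zero {t : ℝ} (ht : 0 ≤ t) :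
    deriv (fun s => ∫ y in (0 : ℝ)..1, (deriv (u s) y ^ 2 + ρ s y ^ 2)) t = 0 := by
  have hrate (y : ℝ) : timeDeriv (fun s y => deriv (u s) y ^ 2 + ρ s y ^ 2) t y
      = 2 * deriv (u t) y * deriv (timeDeriv u t) y
        + 2 * ρ t y * (deriv (fun z => ρ t z * u t z) y + γ * deriv (ρ t) y) := by
    have hd : HasDerivAt (fun s => deriv (u s) y ^ 2 + ρ s y ^ 2) _ t :=
      ((hasDerivAt_timeDeriv (contDiff_uncurry_deriv h.contDiff_u) t y).pow 2).add
        ((hasDerivAt_timeDeriv h.contDiff_ρ t y).pow 2)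
    rw [timeDeriv, hd.deriv, timeDeriv_deriv h.contDiff_u, h.eq_ρ t y ht]
    push_cast
    ring
  rw [(hasDerivAt_intervalIntegral h.contDiff_energyDensity 0 1 t).deriv,
    intervalIntegral.integral_congr fun y _ => hrate y]
  refine intervalIntegral_energyRate_eq_zero (∫ y in (0 : ℝ)..1, u t y) γ (h.contDiff_u_apply t)
    (h.contDiff_timeDeriv t) (h.contDiff_ρ_apply t) (h.periodic_u t)
    (periodic_timeDeriv h.periodic_u t) (h.periodic_ρ t) fun x => ?_
  rw [h.deriv_deriv_timeDeriv ht, h.deriv_mean_eq_zero ht, zero_sub]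

theorem energy_eq {t : ℝ} (ht : 0 ≤ t) :
    ∫ y in (0 : ℝ)..1, (deriv (u t) y ^ 2 + ρ t y ^ 2)
      = ∫ y in (0 : ℝ)..1, (deriv (u 0) y ^ 2 + ρ 0 y ^ 2) :=
  eq_of_deriv_eq_zero_of_le
    (fun s => (hasDerivAt_intervalIntegral h.contDiff_energyDensity 0 1 s).differentiableAt)
    (fun _ hs => h.deriv_energy_eq_zero hs) ht

theorem intervalIntegral_deriv_sq_le {t : ℝ} (ht : 0 ≤ t) :
    ∫ y in (0 : ℝ)..1, deriv (u t) y ^ 2 ≤ ∫ y in (0 : ℝ)..1, (deriv (u 0) y ^ 2 + ρ 0 y ^ 2) := by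
  have hux : Continuous (deriv (u t)) :=
    (h.contDiff_u_apply t).continuous_deriv (by simp)
  rw [← h.energy_eq ht]
  exact intervalIntegral.integral_mono_on zero_le_one ((hux.pow 2).intervalIntegrable _ _)
    ((hux.pow 2).add ((h.contDiff_ρ_apply t).continuous.pow 2)
      |>.intervalIntegrable _ _) fun y _ => le_add_of_nonneg_right (sq_nonneg _)

end IsMuHSSolution

theorem stmt_3
    (γ : ℝ) (u ρ : ℝ → ℝ → ℝ) (μ₀ μ₁ : ℝ)
    (hu : ContDiff ℝ (⊤ : ℕ∞) (Function.uncurry u))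
    (hρ : ContDiff ℝ (⊤ : ℕ∞) (Function.uncurry ρ))
    (huper : ∀ t x : ℝ, u t (x + 1) = u t x)
    (hρper : ∀ t x : ℝ, ρ t (x + 1) = ρ t x)
    (heq1 : ∀ t x : ℝ, 0 ≤ t →
      deriv (fun s => ∫ y in (0:ℝ)..1, u s y) t
        - deriv (fun s => deriv (deriv (u s)) x) t
      = 2 * (∫ y in (0:ℝ)..1, u t y) * deriv (u t) x
        - 2 * deriv (u t) x * deriv (deriv (u t)) x
        - u t x * deriv (deriv (deriv (u t))) x
        + ρ t x * deriv (ρ t) x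
        - γ * deriv (deriv (deriv (u t))) x)
    (heq2 : ∀ t x : ℝ, 0 ≤ t →
      deriv (fun s => ρ s x) t
      = deriv (fun y => ρ t y * u t y) x + γ * deriv (ρ t) x)
    (hμ₀ : μ₀ = ∫ y in (0:ℝ)..1, u 0 y)
    (hμ₁ : μ₁ = Real.sqrt (∫ y in (0:ℝ)..1, ((deriv (u 0) y) ^ 2 + (ρ 0 y) ^ 2)))
    : ∀ t x : ℝ, 0 ≤ t → |u t x| ≤ |μ₀| + Real.sqrt 3 / 6 * μ₁ := by
  have h : IsMuHSSolution γ u ρ := ⟨hu, hρ, huper, hρper, heq1, heq2⟩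
  intro t x ht
  have hpoincare := (h.periodic_u t).abs_sub_intervalIntegral_le
    ((h.contDiff_u_apply t).of_le (by simp)) x
  calc |u t x| ≤ |u t x - ∫ y in (0 : ℝ)..1, u t y| + |∫ y in (0 : ℝ)..1, u t y| := by
        simpa using abs_add_le (u t x - ∫ y in (0 : ℝ)..1, u t y) (∫ y in (0 : ℝ)..1, u t y)
    _ ≤ √3 / 6 * √(∫ y in (0 : ℝ)..1, deriv (u t) y ^ 2) + |μ₀| := by
        rw [h.mean_eq ht, ← hμ₀] at hpoincare ⊢
        exact add_le_add_left hpoincare _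
    _ ≤ √3 / 6 * μ₁ + |μ₀| := by
        rw [hμ₁]
        gcongr
        exact h.intervalIntegral_deriv_sq_le ht
    _ = |μ₀| + √3 / 6 * μ₁ := add_comm _ _
end

section
/- Let w : ℝ → ℝ be continuously differentiable and 1-periodic, and define h : [0,1] → ℝ by h(x) = (x − 1/2)·∫₀¹ w(y) dy − ∫₀ˣ w(y) dy + ∫₀¹(∫₀ˣ′ w(y) dy) dx′. Then ∫₀¹ h(y) dy = 0, and for every x ∈ (0,1), h is twice differentiable at x with ∫₀¹ h(y) dy − h″(x) = w′(x); that is, h = A⁻¹∂_x w where A = μ − ∂_x² and μ(f) = ∫₀¹ f(y) dy. -/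
open MeasureTheory Real Set Filter

lemma integral_sub_one_half : ∫ x in (0:ℝ)..1, (x - 1 / 2) = 0 := by
  rw [intervalIntegral.integral_sub intervalIntegral.intervalIntegrable_id
    intervalIntegrable_const]
  norm_num

section Primitive

variable {w : ℝ → ℝ}

lemma hasDerivAt_affine_sub_primitive (hw : Continuous w) (c C x : ℝ) :
    HasDerivAt (fun t => (t - 1 / 2) * c - (∫ y in (0:ℝ)..t, w y) + C) (c - w x) x := by
  have h_affine : HasDerivAt (fun t : ℝ => (t - 1 / 2) * c) c x := by
    simpa only [one_mul] using ((hasDerivAt_id' x).sub_const (1 / 2)).mul_const c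
  exact (h_affine.sub (hw.integral_hasStrictDerivAt 0 x).hasDerivAt).add_const C

lemma integral_affine_sub_primitive_add_mean (hw : Continuous w) (c : ℝ) :
    ∫ x in (0:ℝ)..1, ((x - 1 / 2) * c - (∫ y in (0:ℝ)..x, w y)
      + ∫ x' in (0:ℝ)..1, ∫ y in (0:ℝ)..x', w y) = 0 := by
  have h_primitive : Continuous fun x => ∫ y in (0:ℝ)..x, w y :=
    intervalIntegral.continuous_primitive (fun a b => hw.intervalIntegrable a b) 0
  have h_affine : IntervalIntegrable (fun x : ℝ => (x - 1 / 2) * c) volume 0 1 :=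
    (by fun_prop : Continuous fun x : ℝ => (x - 1 / 2) * c).intervalIntegrable 0 1
  rw [intervalIntegral.integral_add (h_affine.sub (h_primitive.intervalIntegrable 0 1))
      intervalIntegrable_const,
    intervalIntegral.integral_sub h_affine (h_primitive.intervalIntegrable 0 1),
    intervalIntegral.integral_mul_const, integral_sub_one_half]
  simp

end Primitive

theorem stmt_9_general (w h : ℝ → ℝ)
    (hw : ContDiff ℝ 1 w)
    (hh : ∀ x : ℝ, h x =
      (x - 1 / 2) * (∫ y in (0:ℝ)..1, w y)
      - (∫ y in (0:ℝ)..x, w y)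
      + ∫ x' in (0:ℝ)..1, ∫ y in (0:ℝ)..x', w y) :
    (∫ y in (0:ℝ)..1, h y) = 0 ∧
    ∃ h' : ℝ → ℝ, (∀ x ∈ Set.Ioo (0:ℝ) 1, HasDerivAt h (h' x) x) ∧
      ∀ x ∈ Set.Ioo (0:ℝ) 1, ∃ h'' : ℝ,
        HasDerivAt h' h'' x ∧ (∫ y in (0:ℝ)..1, h y) - h'' = deriv w x := by
  obtain rfl := funext hh
  have h_mean := integral_affine_sub_primitive_add_mean hw.continuous (∫ y in (0:ℝ)..1, w y)
  refine ⟨h_mean, fun x => (∫ y in (0:ℝ)..1, w y) - w x,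
    fun x _ => hasDerivAt_affine_sub_primitive hw.continuous _ _ x, fun x _ => ?_⟩
  refine ⟨-deriv w x, ?_, by rw [h_mean, zero_sub, neg_neg]⟩
  simpa using ((hw.differentiable one_ne_zero x).hasDerivAt).const_sub _

theorem stmt_9 (w h : ℝ → ℝ)
    (hw : ContDiff ℝ 1 w)
    (hwper : ∀ x : ℝ, w (x + 1) = w x)
    (hh : ∀ x : ℝ, h x =
      (x - 1 / 2) * (∫ y in (0:ℝ)..1, w y)
      - (∫ y in (0:ℝ)..x, w y)
      + ∫ x' in (0:ℝ)..1, ∫ y in (0:ℝ)..x', w y) :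
    (∫ y in (0:ℝ)..1, h y) = 0 ∧
    ∃ h' : ℝ → ℝ, (∀ x ∈ Set.Ioo (0:ℝ) 1, HasDerivAt h (h' x) x) ∧
      ∀ x ∈ Set.Ioo (0:ℝ) 1, ∃ h'' : ℝ,
        HasDerivAt h' h'' x ∧ (∫ y in (0:ℝ)..1, h y) - h'' = deriv w x :=
  stmt_9_general w h hw hh
end
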